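/- Let M be an n×n real matrix (n ≥ 1), let D be the diagonal matrix with the same diagonal entries as M, and for a real number t let M_t = M + (t − 1)·D. Let Ω = { t ∈ ℝ : there exists i < n such that the coefficient of x^i in the characteristic polynomial of M_t equals 0 }. Suppose σ ∈ ℝ satisfies: for every real σ' > σ, every complex root of the characteristic polynomial of M_{σ'} has strictly negative real part. Then σ is an upper bound of Ω: every t ∈ Ω satisfies t ≤ σ. -/

import Mathlib

/-!
A monic real polynomial whose complex roots all lie in the open left half-plane is a product of
monic factors `X - r` with `r < 0` and `X ^ 2 - 2 Re z • X + ‖z‖ ^ 2` with `Re z < 0`, each of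
which has positive coefficients; since a product of polynomials with positive coefficients
involves no cancellation, all coefficients of such a polynomial are positive (Stodola's
condition). Hence for `t > σ` no coefficient of the characteristic polynomial of `M_t` vanishes.
-/

open Matrix Polynomial

namespace Polynomial

def HasPosCoeffs {R : Type*} [Semiring R] [PartialOrder R] (p : R[X]) : Prop :=
  ∀ i ≤ p.natDegree, 0 < p.coeff i

section
variable {R : Type*} [Semiring R] [PartialOrder R] [IsStrictOrderedRing R] {p q : R[X]}

theorem HasPosCoeffs.mul (hp : p.HasPosCoeffs) (hq : q.HasPosCoeffs) :
    (p * q).HasPosCoeffs := by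
  intro k hk
  replace hk := hk.trans natDegree_mul_le
  rw [coeff_mul]
  refine Finset.sum_pos' (fun ij _ => ?_) ⟨(min k p.natDegree, k - min k p.natDegree), ?_, ?_⟩
  · rcases le_or_gt ij.1 p.natDegree with hi | hi
    · rcases le_or_gt ij.2 q.natDegree with hj | hj
      · exact (mul_pos (hp _ hi) (hq _ hj)).le
      · simp [coeff_eq_zero_of_natDegree_lt hj]
    · simp [coeff_eq_zero_of_natDegree_lt hi]
  · simp
  · exact mul_pos (hp _ (min_le_right _ _)) (hq _ (by omega))

end

section
variable {R : Type*} [CommRing R] [PartialOrder R] [IsStrictOrderedRing R] {b c : R}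

theorem hasPosCoeffs_X_sub_C (hc : c < 0) : (X - C c).HasPosCoeffs := by
  intro i hi
  rw [natDegree_X_sub_C] at hi
  interval_cases i <;> simp [coeff_X, coeff_C, hc]

theorem natDegree_X_sq_sub_C_mul_X_add_C : (X ^ 2 - C b * X + C c).natDegree = 2 := by
  rw [show (X ^ 2 - C b * X + C c : R[X]) = C 1 * X ^ 2 + C (-b) * X + C c by simp; ring]
  exact natDegree_quadratic one_ne_zero

theorem monic_X_sq_sub_C_mul_X_add_C : (X ^ 2 - C b * X + C c).Monic := by
  rw [Monic, leadingCoeff, natDegree_X_sq_sub_C_mul_X_add_C]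
  simp

theorem hasPosCoeffs_X_sq_sub_C_mul_X_add_C (hb : b < 0) (hc : 0 < c) :
    (X ^ 2 - C b * X + C c).HasPosCoeffs := by
  intro i hi
  rw [natDegree_X_sq_sub_C_mul_X_add_C] at hi
  interval_cases i <;> simp [coeff_X, coeff_C, hb, hc]

end

variable {p : ℝ[X]}

theorem exists_monic_dvd_hasPosCoeffs {z : ℂ} (hz : (p.map (algebraMap ℝ ℂ)).IsRoot z)
    (hre : z.re < 0) : ∃ d : ℝ[X], d.Monic ∧ d ∣ p ∧ 0 < d.natDegree ∧ d.HasPosCoeffs := by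
  by_cases him : z.im = 0
  · have hz_real : z = (z.re : ℂ) := Complex.ext rfl him
    refine ⟨X - C z.re, monic_X_sub_C _, dvd_iff_isRoot.mpr ?_, by simp,
      hasPosCoeffs_X_sub_C hre⟩
    rw [hz_real, IsRoot, eval_map_algebraMap] at hz
    exact (map_eq_zero _).mp ((aeval_algebraMap_apply_eq_algebraMap_eval z.re p).symm.trans hz)
  · have hz_ne : z ≠ 0 := fun h => him (by simp [h])
    refine ⟨_, monic_X_sq_sub_C_mul_X_add_C,
      quadratic_dvd_of_aeval_eq_zero_im_ne_zero p (by rwa [IsRoot, eval_map_algebraMap] at hz) him,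
      by rw [natDegree_X_sq_sub_C_mul_X_add_C]; norm_num,
      hasPosCoeffs_X_sq_sub_C_mul_X_add_C (by linarith) (by positivity)⟩

theorem Monic.hasPosCoeffs_of_forall_re_neg (hp : p.Monic)
    (hroots : ∀ z : ℂ, (p.map (algebraMap ℝ ℂ)).IsRoot z → z.re < 0) : p.HasPosCoeffs := by
  induction hN : p.natDegree using Nat.strong_induction_on generalizing p with
  | _ N ih =>
  rcases N.eq_zero_or_pos with rfl | hN_pos
  · intro i hi
    rw [show i = p.natDegree by omega, hp.coeff_natDegree]
    exact one_pos
  obtain ⟨z, hz⟩ := Complex.exists_root (f := p.map (algebraMap ℝ ℂ))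
    (by rw [hp.degree_map, degree_eq_natDegree hp.ne_zero]; exact_mod_cast hN ▸ hN_pos)
  obtain ⟨d, hd, ⟨q, rfl⟩, hd_deg, hd_pos⟩ := exists_monic_dvd_hasPosCoeffs hz (hroots z hz)
  have hq : q.Monic := hd.of_mul_monic_left hp
  have hq_deg : q.natDegree < N := by
    rw [← hN, hd.natDegree_mul hq]; omega
  exact hd_pos.mul
    (ih _ hq_deg hq (fun w hw => hroots w (hw.dvd (map_dvd _ (dvd_mul_left q d)))) rfl)

end Polynomial

theorem stmt_10_general (n : ℕ) (M : Matrix (Fin n) (Fin n) ℝ)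
    (D : Matrix (Fin n) (Fin n) ℝ)
    (Ω : Set ℝ)
    (hΩ : Ω = {t : ℝ | ∃ i < n, (M + (t - 1) • D).charpoly.coeff i = 0})
    (σ : ℝ)
    (hlt : ∀ σ' : ℝ, σ < σ' →
      ∀ z : ℂ, ((M + (σ' - 1) • D).charpoly.map (algebraMap ℝ ℂ)).IsRoot z →
        z.re < 0) :
    ∀ t ∈ Ω, t ≤ σ := by
  subst hΩ
  rintro t ⟨i, hi, hcoeff⟩
  by_contra! hσt
  have hpos := (charpoly_monic _).hasPosCoeffs_of_forall_re_neg (hlt t hσt) i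
    (by rw [charpoly_natDegree_eq_dim, Fintype.card_fin]; exact hi.le)
  exact hpos.ne' hcoeff

theorem stmt_10 (n : ℕ) (hn : 1 ≤ n) (M : Matrix (Fin n) (Fin n) ℝ)
    (D : Matrix (Fin n) (Fin n) ℝ) (hD : D = Matrix.diagonal (fun i => M i i))
    (Ω : Set ℝ)
    (hΩ : Ω = {t : ℝ | ∃ i < n, (M + (t - 1) • D).charpoly.coeff i = 0})
    (σ : ℝ)
    (hlt : ∀ σ' : ℝ, σ < σ' →
      ∀ z : ℂ, ((M + (σ' - 1) • D).charpoly.map (algebraMap ℝ ℂ)).IsRoot z →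
        z.re < 0) :
    ∀ t ∈ Ω, t ≤ σ :=
  stmt_10_general n M D Ω hΩ σ hlt
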